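/- For every ordered partition π of [n] into k blocks: (lmak + bInv)(π) = n(k−1) − (lcs + rcs)(T ∪ C)(π) − lsb(T ∪ C)(π) − cinv(π). -/
import Mathlib


open Finset

/-- `B` is an ordered partition of `[n]` into `k` (nonempty, pairwise disjoint, covering)
blocks. -/
def isOP (n k : ℕ) (B : Fin k → Finset (Fin n)) : Prop :=
  (∀ j, (B j).Nonempty) ∧ (∀ j₁ j₂, j₁ ≠ j₂ → Disjoint (B j₁) (B j₂)) ∧ ∀ x, ∃ j, x ∈ B j

/-- The type of ordered partitions of `[n]` into `k` blocks. -/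
def OP (n k : ℕ) := {B : Fin k → Finset (Fin n) // isOP n k B}

namespace OP

variable {n k : ℕ}

/-- The opener (least element) of the `j`-th block. -/
def opener (π : OP n k) (j : Fin k) : Fin n := (π.1 j).min' (π.2.1 j)

/-- The closer (greatest element) of the `j`-th block. -/
def closer (π : OP n k) (j : Fin k) : Fin n := (π.1 j).max' (π.2.1 j)

/-- The index of the block containing `i`. -/
noncomputable def blk (π : OP n k) (i : Fin n) : Fin k := (π.2.2.2 i).choose

/-- `ros_i`: openers smaller than `i` in blocks to the right of `i`'s block. -/
noncomputable def ros (π : OP n k) (i : Fin n) : ℕ :=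
  (univ.filter fun j => π.blk i < j ∧ π.opener j < i).card

/-- `rob_i`: openers bigger than `i` in blocks to the right of `i`'s block. -/
noncomputable def rob (π : OP n k) (i : Fin n) : ℕ :=
  (univ.filter fun j => π.blk i < j ∧ i < π.opener j).card

/-- `rcs_i`: closers smaller than `i` in blocks to the right of `i`'s block. -/
noncomputable def rcs (π : OP n k) (i : Fin n) : ℕ :=
  (univ.filter fun j => π.blk i < j ∧ π.closer j < i).card

/-- `rcb_i`: closers bigger than `i` in blocks to the right of `i`'s block. -/
noncomputable def rcb (π : OP n k) (i : Fin n) : ℕ :=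
  (univ.filter fun j => π.blk i < j ∧ i < π.closer j).card

/-- `los_i`: openers smaller than `i` in blocks to the left of `i`'s block. -/
noncomputable def los (π : OP n k) (i : Fin n) : ℕ :=
  (univ.filter fun j => j < π.blk i ∧ π.opener j < i).card

/-- `lob_i`: openers bigger than `i` in blocks to the left of `i`'s block. -/
noncomputable def lob (π : OP n k) (i : Fin n) : ℕ :=
  (univ.filter fun j => j < π.blk i ∧ i < π.opener j).card

/-- `lcs_i`: closers smaller than `i` in blocks to the left of `i`'s block. -/
noncomputable def lcs (π : OP n k) (i : Fin n) : ℕ :=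
  (univ.filter fun j => j < π.blk i ∧ π.closer j < i).card

/-- `lcb_i`: closers bigger than `i` in blocks to the left of `i`'s block. -/
noncomputable def lcb (π : OP n k) (i : Fin n) : ℕ :=
  (univ.filter fun j => j < π.blk i ∧ i < π.closer j).card

/-- `rsb_i`: blocks to the right of `i`'s block with opener smaller and closer bigger
than `i`. -/
noncomputable def rsb (π : OP n k) (i : Fin n) : ℕ :=
  (univ.filter fun j => π.blk i < j ∧ π.opener j < i ∧ i < π.closer j).card

/-- `lsb_i`: blocks to the left of `i`'s block with opener smaller and closer bigger
than `i`. -/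
noncomputable def lsb (π : OP n k) (i : Fin n) : ℕ :=
  (univ.filter fun j => j < π.blk i ∧ π.opener j < i ∧ i < π.closer j).card

noncomputable def ROS (π : OP n k) : ℕ := ∑ i, π.ros i
noncomputable def ROB (π : OP n k) : ℕ := ∑ i, π.rob i
noncomputable def RCS (π : OP n k) : ℕ := ∑ i, π.rcs i
noncomputable def RCB (π : OP n k) : ℕ := ∑ i, π.rcb i
noncomputable def LOS (π : OP n k) : ℕ := ∑ i, π.los i
noncomputable def LOB (π : OP n k) : ℕ := ∑ i, π.lob i
noncomputable def LCS (π : OP n k) : ℕ := ∑ i, π.lcs i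
noncomputable def LCB (π : OP n k) : ℕ := ∑ i, π.lcb i
noncomputable def RSB (π : OP n k) : ℕ := ∑ i, π.rsb i
noncomputable def LSB (π : OP n k) : ℕ := ∑ i, π.lsb i

/-- The set of strict openers of `π`. -/
noncomputable def Oset (π : OP n k) : Finset (Fin n) :=
  univ.filter fun i => π.opener (π.blk i) = i ∧ 2 ≤ (π.1 (π.blk i)).card

/-- The set of singletons of `π`. -/
noncomputable def Sset (π : OP n k) : Finset (Fin n) :=
  univ.filter fun i => (π.1 (π.blk i)).card = 1

/-- The set of transients of `π`. -/
noncomputable def Tset (π : OP n k) : Finset (Fin n) :=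
  univ.filter fun i => π.opener (π.blk i) ≠ i ∧ π.closer (π.blk i) ≠ i

/-- The set of strict closers of `π`. -/
noncomputable def Cset (π : OP n k) : Finset (Fin n) :=
  univ.filter fun i => π.closer (π.blk i) = i ∧ 2 ≤ (π.1 (π.blk i)).card

/-- `inv π`: inversions of the permutation of `[k]` induced by the block ordering,
i.e. pairs of positions `j₁ < j₂` whose blocks have decreasing minima. -/
def inv (π : OP n k) : ℕ :=
  (univ.filter fun p : Fin k × Fin k => p.1 < p.2 ∧ π.opener p.2 < π.opener p.1).card

/-- `cinv π = C(k,2) - inv π`. -/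
def cinv (π : OP n k) : ℕ := k.choose 2 - π.inv

/-- `bInv π`: block inversions, i.e. pairs of positions `j₁ < j₂` with every element of
the `j₁`-st block greater than every element of the `j₂`-nd block. -/
def bInv (π : OP n k) : ℕ :=
  (univ.filter fun p : Fin k × Fin k => p.1 < p.2 ∧ π.closer p.2 < π.opener p.1).card

variable (π : OP n k)

lemma mem_blk (i : Fin n) : i ∈ π.1 (π.blk i) := (π.2.2.2 i).choose_spec

lemma blk_eq {i : Fin n} {j : Fin k} (h : i ∈ π.1 j) : π.blk i = j := by
  by_contra hne
  exact Finset.disjoint_left.mp (π.2.2.1 _ _ hne) (π.mem_blk i) h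

lemma opener_mem (j : Fin k) : π.opener j ∈ π.1 j := Finset.min'_mem _ _
lemma closer_mem (j : Fin k) : π.closer j ∈ π.1 j := Finset.max'_mem _ _
lemma blk_opener (j : Fin k) : π.blk (π.opener j) = j := π.blk_eq (π.opener_mem j)
lemma opener_injective : Function.Injective π.opener := fun a b h => by
  rw [← π.blk_opener a, ← π.blk_opener b, h]
lemma closer_ne {i : Fin n} {j : Fin k} (h : j ≠ π.blk i) : π.closer j ≠ i := by
  intro he
  exact h (π.blk_eq (he ▸ π.closer_mem j)).symm
lemma opener_le_closer (j : Fin k) : π.opener j ≤ π.closer j :=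
  Finset.min'_le _ _ (π.closer_mem j)

lemma los_split (i : Fin n) : π.los i = π.lcs i + π.lsb i := by
  unfold los lcs lsb
  rw [← Finset.card_union_of_disjoint]
  · congr 1
    ext j
    simp only [mem_filter, mem_union, mem_univ, true_and]
    constructor
    · rintro ⟨hj, ho⟩
      rcases lt_trichotomy (π.closer j) i with h | h | h
      · exact Or.inl ⟨hj, h⟩
      · exact absurd h (π.closer_ne (ne_of_lt hj))
      · exact Or.inr ⟨hj, ho, h⟩
    · rintro (⟨hj, hc⟩ | ⟨hj, ho, _⟩)
      · exact ⟨hj, lt_of_le_of_lt (π.opener_le_closer j) hc⟩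
      · exact ⟨hj, ho⟩
  · rw [Finset.disjoint_left]
    rintro j hj hj'
    simp only [mem_filter, mem_univ, true_and] at hj hj'
    exact absurd hj'.2.2 (not_lt.2 hj.2.le)

lemma TC_union : π.Tset ∪ π.Cset = univ.filter (fun i => π.opener (π.blk i) ≠ i) := by
  ext i
  simp only [Tset, Cset, mem_union, mem_filter, mem_univ, true_and]
  constructor
  · rintro (⟨h1, _⟩ | ⟨h1, h2⟩)
    · exact h1
    · intro ho
      have hsub : π.1 (π.blk i) ⊆ {i} := by
        intro x hx
        have h1' := Finset.min'_le _ _ hx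
        have h2' := Finset.le_max' _ _ hx
        rw [Finset.mem_singleton]
        rw [show (π.1 (π.blk i)).min' _ = π.opener (π.blk i) from rfl, ho] at h1'
        rw [show (π.1 (π.blk i)).max' _ = π.closer (π.blk i) from rfl, h1] at h2'
        exact le_antisymm h2' h1'
      have := Finset.card_le_card hsub
      simp at this
      omega
  · intro h
    by_cases hc : π.closer (π.blk i) = i
    · right
      refine ⟨hc, Finset.one_lt_card.mpr ⟨_, π.opener_mem _, i, π.mem_blk i, h⟩⟩
    · exact Or.inl ⟨h, hc⟩

lemma sum_W (g : Fin n → ℕ) :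
    ∑ i ∈ univ.filter (fun i => π.opener (π.blk i) = i), g i = ∑ j, g (π.opener j) := by
  refine (Finset.sum_bij (fun j _ => π.opener j) ?_ ?_ ?_ ?_).symm
  · intro j _
    simp [π.blk_opener j]
  · intro a _ b _ h
    exact π.opener_injective h
  · intro i hi
    simp only [mem_filter, mem_univ, true_and] at hi
    exact ⟨π.blk i, mem_univ _, hi⟩
  · intro j _
    rfl

lemma card_pairs_fst (P : Fin k → Fin k → Prop) [∀ a b, Decidable (P a b)] :
    (univ.filter fun p : Fin k × Fin k => P p.1 p.2).card
      = ∑ j1, (univ.filter fun j2 => P j1 j2).card := by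
  rw [Finset.card_filter, ← Finset.univ_product_univ, Finset.sum_product]
  simp only [Finset.card_filter]

lemma card_pairs_snd (P : Fin k → Fin k → Prop) [∀ a b, Decidable (P a b)] :
    (univ.filter fun p : Fin k × Fin k => P p.1 p.2).card
      = ∑ j2, (univ.filter fun j1 => P j1 j2).card := by
  rw [Finset.card_filter, ← Finset.univ_product_univ, Finset.sum_product_right]
  simp only [Finset.card_filter]

lemma card_lt_pairs : (univ.filter fun p : Fin k × Fin k => p.1 < p.2).card = k.choose 2 := by
  rw [card_pairs_snd (fun j1 j2 => j1 < j2)]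
  have : ∀ j2 : Fin k, (univ.filter fun j1 => j1 < j2).card = (j2 : ℕ) := by
    intro j2
    rw [show (univ.filter fun j1 => j1 < j2) = Finset.Iio j2 by ext x; simp]
    exact Fin.card_Iio j2
  simp_rw [this]
  rw [Fin.sum_univ_eq_sum_range (fun i => (i : ℕ)) k, Finset.sum_range_id,
    Nat.choose_two_right]

lemma inv_add : π.inv +
    (univ.filter fun p : Fin k × Fin k => p.1 < p.2 ∧ π.opener p.1 < π.opener p.2).card
      = k.choose 2 := by
  have hinv : π.inv
      = (univ.filter fun p : Fin k × Fin k => p.1 < p.2 ∧ π.opener p.2 < π.opener p.1).card :=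
    rfl
  have hdisj : Disjoint
      (univ.filter fun p : Fin k × Fin k => p.1 < p.2 ∧ π.opener p.2 < π.opener p.1)
      (univ.filter fun p : Fin k × Fin k => p.1 < p.2 ∧ π.opener p.1 < π.opener p.2) := by
    rw [Finset.disjoint_left]
    rintro p hp hp'
    simp only [mem_filter, mem_univ, true_and] at hp hp'
    exact absurd hp'.2 (not_lt.2 hp.2.le)
  rw [hinv, ← card_lt_pairs (k := k), ← Finset.card_union_of_disjoint hdisj,
    ← Finset.filter_or]
  congr 1
  ext p
  simp only [mem_filter, mem_univ, true_and]
  constructor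
  · rintro (⟨h, -⟩ | ⟨h, -⟩) <;> exact h
  · intro h
    rcases lt_trichotomy (π.opener p.1) (π.opener p.2) with h' | h' | h'
    · exact Or.inr ⟨h, h'⟩
    · exact absurd (π.opener_injective h') h.ne
    · exact Or.inl ⟨h, h'⟩

lemma cinv_eq : π.cinv
    = (univ.filter fun p : Fin k × Fin k => p.1 < p.2 ∧ π.opener p.1 < π.opener p.2).card := by
  have := π.inv_add
  unfold cinv
  omega

lemma sum_W_los : ∑ i ∈ univ.filter (fun i => π.opener (π.blk i) = i), π.los i = π.cinv := by
  rw [π.sum_W, π.cinv_eq, card_pairs_snd (fun j1 j2 => j1 < j2 ∧ π.opener j1 < π.opener j2)]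
  refine Finset.sum_congr rfl fun j _ => ?_
  unfold los
  rw [π.blk_opener]

lemma sum_W_rcs : ∑ i ∈ univ.filter (fun i => π.opener (π.blk i) = i), π.rcs i = π.bInv := by
  rw [π.sum_W]
  unfold bInv
  rw [card_pairs_fst (fun j1 j2 => j1 < j2 ∧ π.closer j2 < π.opener j1)]
  refine Finset.sum_congr rfl fun j _ => ?_
  unfold rcs
  rw [π.blk_opener]

lemma key : π.LOS + π.RCS
    = π.cinv + π.bInv + (∑ i ∈ π.Tset ∪ π.Cset, (π.lcs i + π.rcs i))
      + ∑ i ∈ π.Tset ∪ π.Cset, π.lsb i := by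
  have hL : π.LOS = ∑ i ∈ univ.filter (fun i => π.opener (π.blk i) = i), π.los i
      + ∑ i ∈ univ.filter (fun i => ¬ π.opener (π.blk i) = i), π.los i :=
    (Finset.sum_filter_add_sum_filter_not _ _ _).symm
  have hR : π.RCS = ∑ i ∈ univ.filter (fun i => π.opener (π.blk i) = i), π.rcs i
      + ∑ i ∈ univ.filter (fun i => ¬ π.opener (π.blk i) = i), π.rcs i :=
    (Finset.sum_filter_add_sum_filter_not _ _ _).symm
  rw [hL, hR, π.sum_W_los, π.sum_W_rcs, π.TC_union]
  have : ∀ i, π.los i = π.lcs i + π.lsb i := π.los_split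
  simp_rw [this, Finset.sum_add_distrib]
  ring

end OP

/-- `(lmak + bInv)(π) = n(k-1) - (lcs+rcs)(T ∪ C)(π) - lsb(T ∪ C)(π) - cinv(π)`, where
`lmak = n(k-1) - (los + rcs)`. -/
theorem stmt7 {n k : ℕ} (π : OP n k) :
    ((n : ℤ) * ((k : ℤ) - 1) - ((π.LOS : ℤ) + π.RCS)) + π.bInv =
      (n : ℤ) * ((k : ℤ) - 1) - (∑ i ∈ π.Tset ∪ π.Cset, ((π.lcs i : ℤ) + π.rcs i)) -
        (∑ i ∈ π.Tset ∪ π.Cset, (π.lsb i : ℤ)) - π.cinv := by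
  have h := π.key
  have h' := congrArg (Nat.cast : ℕ → ℤ) h
  push_cast at h'
  linarith
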